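/- Let G = {G_1,…,G_m} be a group structure on [p] with positive weights w and norm φ^G with dual norm φ*. Consider the linear model Y = Xβ* + ε with Y ∈ ℝ^n, X ∈ ℝ^{n×p}, β* ∈ ℝ^p, ε ∈ ℝ^n, and let S̄ = S̄(β*) be the augmented group support of β*. Suppose λ_n > 0 satisfies λ_n ≥ 2φ*(X^⊤ε/n), and suppose X satisfies restricted strong convexity with parameter κ > 0 relative to β* and S̄. Then every minimizer β̂ of (1/(2n))‖Y − Xβ‖₂² + λ_n φ^G(β) over ℝ^p satisfies ‖β̂ − β*‖₂² ≤ 9 λ_n² (Σ_{g∈S̄} w_g²)·(max_{j∈G_{S̄}} h_j) / κ². -/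
import Mathlib


open Finset

/-- Euclidean norm of the subvector of `β` indexed by `T`. -/
noncomputable def subNorm {p : ℕ} (T : Finset (Fin p)) (β : Fin p → ℝ) : ℝ :=
  Real.sqrt (∑ j ∈ T, (β j) ^ 2)

/-- Overlapping group lasso norm `φ^G`. -/
noncomputable def glNorm {p m : ℕ} (G : Fin m → Finset (Fin p)) (w : Fin m → ℝ)
    (β : Fin p → ℝ) : ℝ :=
  ∑ g, w g * subNorm (G g) β

/-- Overlap degree `h_j = #{g : j ∈ G_g}` of coordinate `j`. -/
def overlapDeg {p m : ℕ} (G : Fin m → Finset (Fin p)) (j : Fin p) : ℕ :=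
  (univ.filter fun g => j ∈ G g).card

/-- Group support `S(β) = {g : G_g ∩ supp(β) ≠ ∅}`. -/
noncomputable def groupSupport {p m : ℕ} (G : Fin m → Finset (Fin p)) (β : Fin p → ℝ) :
    Finset (Fin m) :=
  univ.filter fun g => ∃ j ∈ G g, β j ≠ 0

/-- Augmented group support `S̄(β) = {g : G_g ∩ G_{S(β)} ≠ ∅}`. -/
noncomputable def augGroupSupport {p m : ℕ} (G : Fin m → Finset (Fin p)) (β : Fin p → ℝ) :
    Finset (Fin m) :=
  univ.filter fun g => ∃ j ∈ G g, j ∈ (groupSupport G β).biUnion G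

/-- Projection `β_{M(I)}`: the vector agreeing with `β` on `G_I` and zero elsewhere. -/
def projOn {p m : ℕ} (G : Fin m → Finset (Fin p)) (I : Finset (Fin m))
    (β : Fin p → ℝ) : Fin p → ℝ :=
  fun j => if j ∈ I.biUnion G then β j else 0

/-- Projection `β_{M^⊥(I)} = β − β_{M(I)}`. -/
def projOff {p m : ℕ} (G : Fin m → Finset (Fin p)) (I : Finset (Fin m))
    (β : Fin p → ℝ) : Fin p → ℝ :=
  fun j => if j ∈ I.biUnion G then 0 else β j

/-- The dual norm `φ*(v) = sup { βᵀv : φ^G(β) ≤ 1 }`. -/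
noncomputable def glDualNorm {p m : ℕ} (G : Fin m → Finset (Fin p)) (w : Fin m → ℝ)
    (v : Fin p → ℝ) : ℝ :=
  sSup {x : ℝ | ∃ β : Fin p → ℝ, glNorm G w β ≤ 1 ∧ x = ∑ j, β j * v j}


lemma subNorm_nonneg {p : ℕ} (T : Finset (Fin p)) (β : Fin p → ℝ) : 0 ≤ subNorm T β :=
  Real.sqrt_nonneg _

lemma sq_subNorm {p : ℕ} (T : Finset (Fin p)) (β : Fin p → ℝ) :
    (subNorm T β) ^ 2 = ∑ j ∈ T, (β j) ^ 2 :=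
  Real.sq_sqrt (Finset.sum_nonneg fun _ _ => sq_nonneg _)

lemma subNorm_congr {p : ℕ} {T : Finset (Fin p)} {α β : Fin p → ℝ}
    (h : ∀ j ∈ T, (α j) ^ 2 = (β j) ^ 2) : subNorm T α = subNorm T β := by
  unfold subNorm; rw [Finset.sum_congr rfl h]

lemma subNorm_mono {p : ℕ} {T : Finset (Fin p)} {α β : Fin p → ℝ}
    (h : ∀ j ∈ T, (α j) ^ 2 ≤ (β j) ^ 2) : subNorm T α ≤ subNorm T β :=
  Real.sqrt_le_sqrt (Finset.sum_le_sum h)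

lemma subNorm_zero {p : ℕ} {T : Finset (Fin p)} {α : Fin p → ℝ}
    (h : ∀ j ∈ T, α j = 0) : subNorm T α = 0 := by
  unfold subNorm
  rw [Finset.sum_congr rfl fun j hj => by rw [h j hj]]
  simp

lemma abs_le_subNorm {p : ℕ} {T : Finset (Fin p)} {β : Fin p → ℝ} {j : Fin p} (hj : j ∈ T) :
    |β j| ≤ subNorm T β := by
  rw [← Real.sqrt_sq_eq_abs]
  exact Real.sqrt_le_sqrt (Finset.single_le_sum (fun i _ => sq_nonneg (β i)) hj)

lemma subNorm_smul {p : ℕ} (T : Finset (Fin p)) (β : Fin p → ℝ) {c : ℝ} (hc : 0 ≤ c) :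
    subNorm T (fun j => c * β j) = c * subNorm T β := by
  unfold subNorm
  have h2 : ∑ j ∈ T, (c * β j) ^ 2 = c ^ 2 * ∑ j ∈ T, (β j) ^ 2 := by
    rw [Finset.mul_sum]; exact Finset.sum_congr rfl fun j _ => by ring
  rw [h2, Real.sqrt_mul (sq_nonneg c), Real.sqrt_sq hc]

lemma subNorm_add_le {p : ℕ} (T : Finset (Fin p)) (α β : Fin p → ℝ) :
    subNorm T (fun j => α j + β j) ≤ subNorm T α + subNorm T β := by
  have h1 : (0:ℝ) ≤ subNorm T α + subNorm T β :=
    add_nonneg (subNorm_nonneg _ _) (subNorm_nonneg _ _)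
  have hcs : ∑ j ∈ T, α j * β j ≤ subNorm T α * subNorm T β := by
    have hc := sum_mul_sq_le_sq_mul_sq T α β
    have habs : (∑ j ∈ T, α j * β j) ^ 2 ≤ (subNorm T α * subNorm T β) ^ 2 := by
      rw [mul_pow, sq_subNorm, sq_subNorm]; exact hc
    calc ∑ j ∈ T, α j * β j ≤ |∑ j ∈ T, α j * β j| := le_abs_self _
      _ = Real.sqrt ((∑ j ∈ T, α j * β j) ^ 2) := (Real.sqrt_sq_eq_abs _).symm
      _ ≤ Real.sqrt ((subNorm T α * subNorm T β) ^ 2) := Real.sqrt_le_sqrt habs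
      _ = subNorm T α * subNorm T β :=
          Real.sqrt_sq (mul_nonneg (subNorm_nonneg _ _) (subNorm_nonneg _ _))
  have hexp : ∑ j ∈ T, (α j + β j) ^ 2
      = ∑ j ∈ T, (α j) ^ 2 + 2 * ∑ j ∈ T, α j * β j + ∑ j ∈ T, (β j) ^ 2 := by
    rw [Finset.mul_sum, ← Finset.sum_add_distrib, ← Finset.sum_add_distrib]
    exact Finset.sum_congr rfl fun j _ => by ring
  have hle : ∑ j ∈ T, (α j + β j) ^ 2 ≤ (subNorm T α + subNorm T β) ^ 2 := by
    nlinarith [sq_subNorm T α, sq_subNorm T β]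
  calc subNorm T (fun j => α j + β j) ≤ Real.sqrt ((subNorm T α + subNorm T β) ^ 2) :=
        Real.sqrt_le_sqrt hle
    _ = _ := Real.sqrt_sq h1


lemma glNorm_nonneg' {p m : ℕ} (G : Fin m → Finset (Fin p)) (w : Fin m → ℝ)
    (hw : ∀ g, 0 ≤ w g) (β : Fin p → ℝ) : 0 ≤ glNorm G w β :=
  Finset.sum_nonneg fun g _ => mul_nonneg (hw g) (subNorm_nonneg _ _)

lemma w_abs_le_glNorm {p m : ℕ} (G : Fin m → Finset (Fin p)) (w : Fin m → ℝ)
    (hw : ∀ g, 0 ≤ w g) {j : Fin p} {g : Fin m} (hj : j ∈ G g) (β : Fin p → ℝ) :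
    w g * |β j| ≤ glNorm G w β :=
  le_trans (mul_le_mul_of_nonneg_left (abs_le_subNorm hj) (hw g))
    (Finset.single_le_sum (fun g' _ => mul_nonneg (hw g') (subNorm_nonneg _ _))
      (Finset.mem_univ g))

lemma glNorm_smul' {p m : ℕ} (G : Fin m → Finset (Fin p)) (w : Fin m → ℝ)
    (β : Fin p → ℝ) {c : ℝ} (hc : 0 ≤ c) :
    glNorm G w (fun j => c * β j) = c * glNorm G w β := by
  unfold glNorm
  rw [Finset.mul_sum]
  exact Finset.sum_congr rfl fun g _ => by rw [subNorm_smul _ _ hc]; ring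


set_option maxHeartbeats 2000000 in
/-- under the choice `λ_n ≥ 2φ*(Xᵀε/n)` and restricted strong
convexity with parameter `κ` relative to `β*` and `S̄ = S̄(β*)`, every minimizer
of the group-lasso objective satisfies
`‖β̂ − β*‖₂² ≤ 9 λ_n² (Σ_{g∈S̄} w_g²)(max_{j∈G_{S̄}} h_j) / κ²`. -/
theorem glNorm_error_bound {n p m : ℕ}
    (G : Fin m → Finset (Fin p)) (w : Fin m → ℝ)
    (hw : ∀ g, 0 < w g) (hcover : ∀ j : Fin p, ∃ g, j ∈ G g)
    (X : Fin n → Fin p → ℝ) (βs : Fin p → ℝ) (ε : Fin n → ℝ)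
    (Y : Fin n → ℝ) (hY : Y = fun i => (∑ j, X i j * βs j) + ε i)
    (lam : ℝ) (hlam_pos : 0 < lam)
    (hlam : 2 * glDualNorm G w (fun j => (∑ i, X i j * ε i) / n) ≤ lam)
    (κ : ℝ) (hκ : 0 < κ)
    (hRSC : ∀ β : Fin p → ℝ,
      glNorm G w (projOff G (augGroupSupport G βs) (β - βs))
          ≤ 3 * glNorm G w (projOn G (augGroupSupport G βs) (β - βs)) →
      κ * (∑ j, (β j - βs j) ^ 2) ≤ (∑ i, (∑ j, X i j * (β j - βs j)) ^ 2) / n)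
    (bhat : Fin p → ℝ)
    (hmin : ∀ β : Fin p → ℝ,
      (1 / (2 * (n : ℝ))) * (∑ i, (Y i - ∑ j, X i j * bhat j) ^ 2) + lam * glNorm G w bhat
        ≤ (1 / (2 * (n : ℝ))) * (∑ i, (Y i - ∑ j, X i j * β j) ^ 2) + lam * glNorm G w β) :
    ∑ j, (bhat j - βs j) ^ 2
      ≤ 9 * lam ^ 2 * (∑ g ∈ augGroupSupport G βs, (w g) ^ 2) *
          (⨆ j ∈ (augGroupSupport G βs).biUnion G, (overlapDeg G j : ℝ)) / κ ^ 2 := by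
  
  classical
  have hw0 : ∀ g, 0 ≤ w g := fun g => (hw g).le
  set S := groupSupport G βs with hSdef
  set Sb := augGroupSupport G βs with hSbdef
  have hSSb : S ⊆ Sb := by
    intro g hg
    have hg' := hg
    rw [hSdef] at hg'
    simp only [groupSupport, Finset.mem_filter] at hg'
    obtain ⟨-, j, hj, hne⟩ := hg'
    rw [hSbdef]
    simp only [augGroupSupport, Finset.mem_filter]
    exact ⟨Finset.mem_univ g, j, hj, Finset.mem_biUnion.2 ⟨g, hg, hj⟩⟩
  have hβs0 : ∀ g, g ∉ S → ∀ j ∈ G g, βs j = 0 := by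
    intro g hg j hj
    by_contra hne
    apply hg
    rw [hSdef]
    simp only [groupSupport, Finset.mem_filter]
    exact ⟨Finset.mem_univ g, j, hj, hne⟩
  have hjU : ∀ g ∈ S, ∀ j ∈ G g, j ∈ Sb.biUnion G := fun g hg j hj =>
    Finset.mem_biUnion.2 ⟨g, hSSb hg, hj⟩
  -- the dual-norm pairing inequality
  set v := fun j => (∑ i, X i j * ε i) / (n : ℝ) with hvdef
  have hbdd : BddAbove {x : ℝ | ∃ β : Fin p → ℝ, glNorm G w β ≤ 1 ∧ x = ∑ j, β j * v j} := by
    refine ⟨∑ j, |v j| / w (hcover j).choose, ?_⟩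
    rintro x ⟨β, hβ, rfl⟩
    refine Finset.sum_le_sum fun j _ => ?_
    have hg := (hcover j).choose_spec
    have hβj : |β j| ≤ 1 / w (hcover j).choose := by
      rw [le_div_iff₀ (hw _), mul_comm]
      exact le_trans (w_abs_le_glNorm G w hw0 hg β) hβ
    calc β j * v j ≤ |β j * v j| := le_abs_self _
      _ = |β j| * |v j| := abs_mul _ _
      _ ≤ (1 / w (hcover j).choose) * |v j| :=
          mul_le_mul_of_nonneg_right hβj (abs_nonneg _)
      _ = |v j| / w (hcover j).choose := by rw [div_mul_eq_mul_div, one_mul]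
  have hdual_le : glDualNorm G w v ≤ lam / 2 := by linarith
  unfold glDualNorm at hdual_le
  have hpair : ∀ β : Fin p → ℝ, ∑ j, β j * v j ≤ glNorm G w β * (lam / 2) := by
    intro β
    rcases eq_or_lt_of_le (glNorm_nonneg' G w hw0 β) with hz | hpos
    · have hb0 : ∀ j, β j = 0 := by
        intro j
        obtain ⟨g, hg⟩ := hcover j
        have h1 := w_abs_le_glNorm G w hw0 hg β
        rw [← hz] at h1
        have h2 : |β j| ≤ 0 := by nlinarith [hw g, abs_nonneg (β j)]
        exact abs_eq_zero.1 (le_antisymm h2 (abs_nonneg _))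
      rw [← hz, zero_mul]
      exact le_of_eq (Finset.sum_eq_zero fun j _ => by rw [hb0 j, zero_mul])
    · have hcinv : (0:ℝ) ≤ (glNorm G w β)⁻¹ := inv_nonneg.2 hpos.le
      have hmem : (∑ j, ((glNorm G w β)⁻¹ * β j) * v j)
          ∈ {x : ℝ | ∃ β' : Fin p → ℝ, glNorm G w β' ≤ 1 ∧ x = ∑ j, β' j * v j} := by
        refine ⟨fun j => (glNorm G w β)⁻¹ * β j, ?_, rfl⟩
        rw [glNorm_smul' G w β hcinv, inv_mul_cancel₀ (ne_of_gt hpos)]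
      have hle : (∑ j, ((glNorm G w β)⁻¹ * β j) * v j) ≤ lam / 2 :=
        le_trans (le_csSup hbdd hmem) hdual_le
      have heq : ∑ j, β j * v j = glNorm G w β * ∑ j, ((glNorm G w β)⁻¹ * β j) * v j := by
        rw [Finset.mul_sum]
        refine Finset.sum_congr rfl fun j _ => ?_
        field_simp
      rw [heq]
      exact mul_le_mul_of_nonneg_left hle hpos.le
  -- basic inequality
  have h1 := hmin βs
  have hEL : ∑ i, (Y i - ∑ j, X i j * bhat j) ^ 2
      = ∑ i, (ε i - ∑ j, X i j * (bhat j - βs j)) ^ 2 := by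
    refine Finset.sum_congr rfl fun i _ => ?_
    have hsub : ∑ j, X i j * (bhat j - βs j)
        = ∑ j, X i j * bhat j - ∑ j, X i j * βs j := by
      rw [← Finset.sum_sub_distrib]
      exact Finset.sum_congr rfl fun j _ => by ring
    simp only [hY]
    rw [hsub]; ring
  have hER : ∑ i, (Y i - ∑ j, X i j * βs j) ^ 2 = ∑ i, (ε i) ^ 2 := by
    refine Finset.sum_congr rfl fun i _ => ?_
    simp only [hY]; ring
  rw [hEL, hER] at h1
  have hsq : ∑ i, (ε i - ∑ j, X i j * (bhat j - βs j)) ^ 2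
      = ∑ i, (ε i) ^ 2 - 2 * ∑ i, ε i * (∑ j, X i j * (bhat j - βs j))
        + ∑ i, (∑ j, X i j * (bhat j - βs j)) ^ 2 := by
    rw [Finset.mul_sum, ← Finset.sum_sub_distrib, ← Finset.sum_add_distrib]
    exact Finset.sum_congr rfl fun i _ => by ring
  rw [hsq] at h1
  have hswap : ∑ i, ε i * (∑ j, X i j * (bhat j - βs j))
      = ∑ j, (bhat j - βs j) * (∑ i, X i j * ε i) := by
    rw [Finset.sum_congr rfl fun i (_ : i ∈ univ) => Finset.mul_sum (univ) _ (ε i),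
      Finset.sum_comm]
    refine Finset.sum_congr rfl fun j _ => ?_
    rw [Finset.mul_sum]
    exact Finset.sum_congr rfl fun i _ => by ring
  have hswapdiv : (∑ i, ε i * (∑ j, X i j * (bhat j - βs j))) / (n : ℝ)
      = ∑ j, (bhat j - βs j) * v j := by
    rw [hswap, Finset.sum_div]
    refine Finset.sum_congr rfl fun j _ => ?_
    simp only [hvdef]
    rw [mul_div_assoc]
  have hdiv2 : ∀ E : ℝ, (1 / (2 * (n : ℝ))) * (2 * E) = E / (n : ℝ) := by
    intro E
    rcases eq_or_ne ((n : ℝ)) 0 with hn | hn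
    · rw [hn]; simp
    · field_simp
  have key : (1 / (2 * (n : ℝ))) * (∑ i, (∑ j, X i j * (bhat j - βs j)) ^ 2)
      ≤ ∑ j, (bhat j - βs j) * v j
        + lam * (glNorm G w βs - glNorm G w bhat) := by
    have h3 := hdiv2 (∑ i, ε i * (∑ j, X i j * (bhat j - βs j)))
    rw [← hswapdiv]
    have hdistrib : (1 / (2 * (n : ℝ))) *
        (∑ i, (ε i) ^ 2 - 2 * ∑ i, ε i * (∑ j, X i j * (bhat j - βs j))
          + ∑ i, (∑ j, X i j * (bhat j - βs j)) ^ 2)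
        = (1 / (2 * (n : ℝ))) * ∑ i, (ε i) ^ 2
          - (1 / (2 * (n : ℝ))) * (2 * ∑ i, ε i * (∑ j, X i j * (bhat j - βs j)))
          + (1 / (2 * (n : ℝ))) * ∑ i, (∑ j, X i j * (bhat j - βs j)) ^ 2 := by ring
    linarith [h1, h3, hdistrib]
  -- decomposition over the group support
  set A := ∑ g ∈ S, w g * subNorm (G g) (fun j => bhat j - βs j) with hAdef
  set B := ∑ g ∈ Sᶜ, w g * subNorm (G g) (fun j => bhat j - βs j) with hBdef
  have hA0 : 0 ≤ A :=
    Finset.sum_nonneg fun g _ => mul_nonneg (hw0 g) (subNorm_nonneg _ _)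
  have hB0 : 0 ≤ B :=
    Finset.sum_nonneg fun g _ => mul_nonneg (hw0 g) (subNorm_nonneg _ _)
  have hAB : A + B = glNorm G w (fun j => bhat j - βs j) :=
    Finset.sum_add_sum_compl S _
  have hdecomp : glNorm G w βs - glNorm G w bhat ≤ A - B := by
    have hsplit : glNorm G w βs - glNorm G w bhat
        = (∑ g ∈ S, (w g * subNorm (G g) βs - w g * subNorm (G g) bhat))
          + ∑ g ∈ Sᶜ, (w g * subNorm (G g) βs - w g * subNorm (G g) bhat) := by
      rw [Finset.sum_add_sum_compl]
      rw [glNorm, glNorm, ← Finset.sum_sub_distrib]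
    have hb1 : ∑ g ∈ S, (w g * subNorm (G g) βs - w g * subNorm (G g) bhat) ≤ A := by
      refine Finset.sum_le_sum fun g hg => ?_
      have e1 : subNorm (G g) βs
          = subNorm (G g) (fun j => (βs j - bhat j) + bhat j) :=
        subNorm_congr (fun j _ => by ring)
      have e2 : subNorm (G g) (fun j => βs j - bhat j)
          = subNorm (G g) (fun j => bhat j - βs j) :=
        subNorm_congr (fun j _ => by ring)
      have h5 : subNorm (G g) βs - subNorm (G g) bhat
          ≤ subNorm (G g) (fun j => bhat j - βs j) := by
        have h4 := subNorm_add_le (G g) (fun j => βs j - bhat j) bhat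
        rw [← e1, e2] at h4
        linarith
      linarith [mul_le_mul_of_nonneg_left h5 (hw0 g)]
    have hb2 : ∑ g ∈ Sᶜ, (w g * subNorm (G g) βs - w g * subNorm (G g) bhat) = -B := by
      rw [hBdef, ← Finset.sum_neg_distrib]
      refine Finset.sum_congr rfl fun g hg => ?_
      have hgS : g ∉ S := Finset.mem_compl.1 hg
      have e3 : subNorm (G g) βs = 0 := subNorm_zero fun j hj => hβs0 g hgS j hj
      have e4 : subNorm (G g) bhat = subNorm (G g) (fun j => bhat j - βs j) :=
        subNorm_congr fun j hj => by rw [hβs0 g hgS j hj]; ring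
      rw [e3, e4]; ring
    linarith [hsplit, hb1, hb2]
  have hpairΔ : ∑ j, (bhat j - βs j) * v j
      ≤ glNorm G w (fun j => bhat j - βs j) * (lam / 2) := hpair _
  rw [← hAB] at hpairΔ
  have hQ0 : 0 ≤ ∑ i, (∑ j, X i j * (bhat j - βs j)) ^ 2 :=
    Finset.sum_nonneg fun i _ => sq_nonneg _
  have hc0 : (0:ℝ) ≤ 1 / (2 * (n : ℝ)) := by positivity
  have key2 : (1 / (2 * (n : ℝ))) * (∑ i, (∑ j, X i j * (bhat j - βs j)) ^ 2)
      ≤ (A + B) * (lam / 2) + lam * (A - B) := by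
    have h6 := mul_le_mul_of_nonneg_left hdecomp hlam_pos.le
    linarith [key, hpairΔ, h6]
  have hB3A : B ≤ 3 * A := by
    nlinarith [mul_nonneg hc0 hQ0, key2, hlam_pos]
  -- the cone condition
  have hoffB : glNorm G w (projOff G Sb (bhat - βs)) ≤ B := by
    have h7 : ∑ g ∈ S, w g * subNorm (G g) (projOff G Sb (bhat - βs)) = 0 := by
      refine Finset.sum_eq_zero fun g hg => ?_
      rw [subNorm_zero fun j hj => ?_, mul_zero]
      simp [projOff, hjU g hg j hj]
    have h8 : ∑ g ∈ Sᶜ, w g * subNorm (G g) (projOff G Sb (bhat - βs)) ≤ B := by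
      refine Finset.sum_le_sum fun g hg => ?_
      refine mul_le_mul_of_nonneg_left (subNorm_mono fun j hj => ?_) (hw0 g)
      by_cases hjm : j ∈ Sb.biUnion G
      · simp [projOff, hjm]; positivity
      · simp [projOff, hjm]
    calc glNorm G w (projOff G Sb (bhat - βs))
        = ∑ g ∈ S, w g * subNorm (G g) (projOff G Sb (bhat - βs))
          + ∑ g ∈ Sᶜ, w g * subNorm (G g) (projOff G Sb (bhat - βs)) :=
          (Finset.sum_add_sum_compl S _).symm
      _ ≤ B := by rw [h7]; linarith
  have honA : A ≤ glNorm G w (projOn G Sb (bhat - βs)) := by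
    have h9 : A = ∑ g ∈ S, w g * subNorm (G g) (projOn G Sb (bhat - βs)) := by
      rw [hAdef]
      refine Finset.sum_congr rfl fun g hg => ?_
      rw [subNorm_congr (α := fun j => bhat j - βs j)
        (β := projOn G Sb (bhat - βs)) fun j hj => ?_]
      simp [projOn, hjU g hg j hj]
    rw [h9]
    exact Finset.sum_le_sum_of_subset_of_nonneg (Finset.subset_univ S)
      (fun g _ _ => mul_nonneg (hw0 g) (subNorm_nonneg _ _))
  have hcone : glNorm G w (projOff G Sb (bhat - βs))
      ≤ 3 * glNorm G w (projOn G Sb (bhat - βs)) := by linarith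
  have hR := hRSC bhat hcone
  -- combine with RSC
  have hQn : (∑ i, (∑ j, X i j * (bhat j - βs j)) ^ 2) / (n : ℝ) ≤ 3 * lam * A - lam * B := by
    have h10 : (∑ i, (∑ j, X i j * (bhat j - βs j)) ^ 2) / (n : ℝ)
        = 2 * ((1 / (2 * (n : ℝ))) * (∑ i, (∑ j, X i j * (bhat j - βs j)) ^ 2)) := by
      rcases eq_or_ne ((n : ℝ)) 0 with hn | hn
      · rw [hn]; simp
      · field_simp
    rw [h10]
    linarith [key2]
  have hD0 : 0 ≤ ∑ j, (bhat j - βs j) ^ 2 := Finset.sum_nonneg fun j _ => sq_nonneg _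
  have hκD3A : κ * (∑ j, (bhat j - βs j) ^ 2) ≤ 3 * lam * A := by
    have := mul_nonneg hlam_pos.le hB0
    linarith [hR, hQn]
  -- Cauchy-Schwarz and the overlap-degree bound
  set U := Sb.biUnion G with hUdef
  set H := ⨆ j ∈ U, (overlapDeg G j : ℝ) with hHdef
  have hHb : ∀ j ∈ U, (overlapDeg G j : ℝ) ≤ H := by
    intro j hj
    have hbd : BddAbove (Set.range fun j' => ⨆ _ : j' ∈ U, (overlapDeg G j' : ℝ)) :=
      Set.Finite.bddAbove (Set.finite_range _)
    have h11 : (⨆ _ : j ∈ U, (overlapDeg G j : ℝ)) = (overlapDeg G j : ℝ) := ciSup_pos hj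
    rw [hHdef, ← h11]
    exact le_ciSup hbd j
  have hH0 : 0 ≤ H := by
    rw [hHdef]
    exact Real.iSup_nonneg fun j => Real.iSup_nonneg fun _ => Nat.cast_nonneg _
  have hsub2 : ∑ g ∈ S, (subNorm (G g) (fun j => bhat j - βs j)) ^ 2
      ≤ H * ∑ j, (bhat j - βs j) ^ 2 := by
    have h12 : ∀ g ∈ S, (subNorm (G g) (fun j => bhat j - βs j)) ^ 2
        = ∑ j, (if j ∈ G g then (bhat j - βs j) ^ 2 else 0) := by
      intro g _
      rw [sq_subNorm, ← Finset.univ_inter (G g), ← Finset.sum_ite_mem]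
      exact Finset.sum_congr rfl fun j _ => by by_cases h : j ∈ G g <;> simp [h]
    rw [Finset.sum_congr rfl h12, Finset.sum_comm]
    have h13 : ∀ j : Fin p, (∑ g ∈ S, if j ∈ G g then (bhat j - βs j) ^ 2 else 0)
        ≤ H * (bhat j - βs j) ^ 2 := by
      intro j
      rw [← Finset.sum_filter, Finset.sum_const, nsmul_eq_mul]
      rcases (S.filter fun g => j ∈ G g).eq_empty_or_nonempty with he | he
      · rw [he]
        simp only [Finset.card_empty, Nat.cast_zero, zero_mul]
        exact mul_nonneg hH0 (sq_nonneg _)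
      · obtain ⟨g, hgf⟩ := he
        rw [Finset.mem_filter] at hgf
        have hjU' : j ∈ U := Finset.mem_biUnion.2 ⟨g, hSSb hgf.1, hgf.2⟩
        have hcard : ((S.filter fun g => j ∈ G g).card : ℝ) ≤ (overlapDeg G j : ℝ) := by
          have := Finset.card_le_card
            (Finset.filter_subset_filter (fun g => j ∈ G g) (Finset.subset_univ S))
          exact_mod_cast this
        exact mul_le_mul_of_nonneg_right (hcard.trans (hHb j hjU')) (sq_nonneg _)
    calc ∑ j, (∑ g ∈ S, if j ∈ G g then (bhat j - βs j) ^ 2 else 0)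
        ≤ ∑ j, H * (bhat j - βs j) ^ 2 := Finset.sum_le_sum fun j _ => h13 j
      _ = H * ∑ j, (bhat j - βs j) ^ 2 := (Finset.mul_sum _ _ _).symm
  have hCS : A ^ 2 ≤ (∑ g ∈ S, w g ^ 2) *
      (∑ g ∈ S, (subNorm (G g) (fun j => bhat j - βs j)) ^ 2) :=
    sum_mul_sq_le_sq_mul_sq S w _
  have hW1 : ∑ g ∈ S, w g ^ 2 ≤ ∑ g ∈ Sb, w g ^ 2 :=
    Finset.sum_le_sum_of_subset_of_nonneg hSSb (fun g _ _ => sq_nonneg _)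
  have hW0 : (0:ℝ) ≤ ∑ g ∈ Sb, w g ^ 2 := Finset.sum_nonneg fun g _ => sq_nonneg _
  have hA2 : A ^ 2 ≤ (∑ g ∈ Sb, w g ^ 2) * (H * ∑ j, (bhat j - βs j) ^ 2) := by
    refine hCS.trans (mul_le_mul hW1 hsub2 ?_ hW0)
    exact Finset.sum_nonneg fun g _ => sq_nonneg _
  -- conclude
  rw [le_div_iff₀ (pow_pos hκ 2)]
  rcases eq_or_lt_of_le hD0 with hD | hD
  · rw [← hD, zero_mul]
    have h15 : (0:ℝ) ≤ 9 * lam ^ 2 := by positivity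
    nlinarith [mul_nonneg (mul_nonneg h15 hW0) hH0]
  · have e1 : (κ * ∑ j, (bhat j - βs j) ^ 2) * (κ * ∑ j, (bhat j - βs j) ^ 2)
        ≤ (3 * lam * A) * (3 * lam * A) :=
      mul_self_le_mul_self (mul_nonneg hκ.le hD0) hκD3A
    have e2 : 9 * lam ^ 2 * A ^ 2
        ≤ 9 * lam ^ 2 * ((∑ g ∈ Sb, w g ^ 2) * (H * ∑ j, (bhat j - βs j) ^ 2)) :=
      mul_le_mul_of_nonneg_left hA2 (by positivity)
    have e3 : (κ ^ 2 * ∑ j, (bhat j - βs j) ^ 2) * (∑ j, (bhat j - βs j) ^ 2)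
        ≤ (9 * lam ^ 2 * (∑ g ∈ Sb, w g ^ 2) * H) * (∑ j, (bhat j - βs j) ^ 2) := by
      nlinarith [e1, e2]
    have e4 := le_of_mul_le_mul_right e3 hD
    linarith
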